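/- For every positive integer L and every j with 0 ≤ j < L, the integral ∫_0^{(j+1/2)π} sin(u)/sin(u/(2L)) du is strictly positive. -/
import Mathlib

open MeasureTheory

open Real Finset in
private lemma sin_two_mul_sum (L : ℕ) (x : ℝ) :
    Real.sin (2 * L * x) =
      Real.sin x * (2 * ∑ k ∈ Finset.range L, Real.cos ((2 * k + 1) * x)) := by
  induction L with
  | zero => simp
  | succ n ih =>
    have e1 : (2 * ((n : ℝ) + 1) * x - 2 * n * x) / 2 = x := by ring
    have e2 : (2 * ((n : ℝ) + 1) * x + 2 * n * x) / 2 = (2 * n + 1) * x := by ring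
    have h : Real.sin (2 * ((n : ℝ) + 1) * x) - Real.sin (2 * (n : ℝ) * x)
        = 2 * Real.sin x * Real.cos ((2 * n + 1) * x) := by
      rw [Real.sin_sub_sin, e1, e2]
    rw [Finset.sum_range_succ]
    push_cast
    push_cast at ih
    linarith [h, ih]

private noncomputable def HHaux (L : ℕ) (u : ℝ) : ℝ :=
  2 * ∑ k ∈ Finset.range L, Real.cos ((2 * k + 1) * (u / (2 * L)))

private lemma HHaux_cont (L : ℕ) : Continuous (HHaux L) := by
  unfold HHaux
  apply Continuous.mul continuous_const
  apply continuous_finset_sum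
  intro i _
  fun_prop

private lemma HHaux_eq {L : ℕ} {u : ℝ} (h : Real.sin (u / (2 * L)) ≠ 0) :
    HHaux L u = Real.sin u / Real.sin (u / (2 * L)) := by
  have hL : (L : ℝ) ≠ 0 := by
    intro h0
    simp [h0] at h
  have hu : 2 * (L : ℝ) * (u / (2 * L)) = u := by field_simp
  have key := sin_two_mul_sum L (u / (2 * L))
  rw [hu] at key
  rw [key, mul_div_cancel_left₀ _ h]
  rfl

set_option maxHeartbeats 1000000 in
theorem integral_pos (L : ℕ) (hL : 1 ≤ L) (j : ℕ) (hj : j < L) :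
    0 < ∫ u in (0:ℝ)..(((j : ℝ) + 1/2) * Real.pi),
      Real.sin u / Real.sin (u / (2 * (L : ℝ))) := by
  have hπ := Real.pi_pos
  have hLpos : (0:ℝ) < L := by exact_mod_cast hL
  set π := Real.pi with hπdef
  set T : ℝ := ((j : ℝ) + 1/2) * π with hTdef
  have hjL : (j : ℝ) + 1 ≤ L := by exact_mod_cast hj
  have hT0 : 0 < T := by positivity
  have hTL : T ≤ L * π := by nlinarith
  -- denominator facts
  have den_pos : ∀ u : ℝ, 0 < u → u ≤ L * π → 0 < Real.sin (u / (2 * L)) := by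
    intro u h1 h2
    apply Real.sin_pos_of_pos_of_lt_pi (by positivity)
    rw [div_lt_iff₀ (by positivity)]
    nlinarith
  have mem_Icc : ∀ w : ℝ, 0 ≤ w → w ≤ L * π → w / (2 * L) ∈ Set.Icc (-(π/2)) (π/2) := by
    intro w h0 h1
    constructor
    · have : (0:ℝ) ≤ w / (2 * L) := by positivity
      linarith
    · rw [div_le_iff₀ (by positivity)]
      nlinarith
  have den_le : ∀ u v : ℝ, 0 ≤ u → u ≤ v → v ≤ L * π →
      Real.sin (u / (2 * L)) ≤ Real.sin (v / (2 * L)) := by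
    intro u v h0 huv hv
    exact Real.strictMonoOn_sin.monotoneOn (mem_Icc u h0 (huv.trans hv))
      (mem_Icc v (h0.trans huv) hv) (by gcongr)
  have Hval : ∀ u : ℝ, 0 < u → u ≤ L * π →
      HHaux L u = Real.sin u / Real.sin (u / (2 * L)) :=
    fun u h1 h2 => HHaux_eq (ne_of_gt (den_pos u h1 h2))
  have Hcont := HHaux_cont L
  have Hint : ∀ a b : ℝ, IntervalIntegrable (HHaux L) volume a b :=
    fun a b => Hcont.intervalIntegrable a b
  have Hcont2 : ∀ d : ℝ, Continuous (fun t => HHaux L (t + d)) :=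
    fun d => Hcont.comp (continuous_id.add continuous_const)
  have Hint2 : ∀ (d a b : ℝ), IntervalIntegrable (fun t => HHaux L (t + d)) volume a b :=
    fun d a b => (Hcont2 d).intervalIntegrable a b
  -- sin shifting
  have key_sin_even : ∀ m : ℕ, Even m → ∀ t : ℝ, Real.sin (t + m * π) = Real.sin t := by
    rintro m ⟨i, hi⟩ t
    have : (m : ℝ) * π = (i : ℝ) * (2 * π) := by rw [hi]; push_cast; ring
    rw [this, Real.sin_add_nat_mul_two_pi]
  have key_sin_odd : ∀ m : ℕ, Odd m → ∀ t : ℝ, Real.sin (t + m * π) = -Real.sin t := by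
    rintro m ⟨i, hi⟩ t
    have : t + (m : ℝ) * π = (t + π) + (i : ℝ) * (2 * π) := by rw [hi]; push_cast; ring
    rw [this, Real.sin_add_nat_mul_two_pi, Real.sin_add_pi]
  -- pointwise sign facts
  have Hpos : ∀ m : ℕ, Even m → m < L → ∀ t : ℝ, 0 < t → t < π →
      0 < HHaux L (t + m * π) := by
    intro m hm hmL t ht1 ht2
    have hmL' : (m : ℝ) + 1 ≤ L := by exact_mod_cast hmL
    have h1 : 0 < t + m * π := by positivity
    have h2 : t + m * π ≤ L * π := by nlinarith
    rw [Hval _ h1 h2, key_sin_even m hm t]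
    exact div_pos (Real.sin_pos_of_pos_of_lt_pi ht1 ht2) (den_pos _ h1 h2)
  have Hneg : ∀ m : ℕ, Odd m → m < L → ∀ t : ℝ, 0 < t → t < π →
      HHaux L (t + m * π) < 0 := by
    intro m hm hmL t ht1 ht2
    have hmL' : (m : ℝ) + 1 ≤ L := by exact_mod_cast hmL
    have h1 : 0 < t + m * π := by positivity
    have h2 : t + m * π ≤ L * π := by nlinarith
    rw [Hval _ h1 h2, key_sin_odd m hm t]
    exact div_neg_of_neg_of_pos (neg_neg_iff_pos.mpr (Real.sin_pos_of_pos_of_lt_pi ht1 ht2))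
      (den_pos _ h1 h2)
  have Hnonneg : ∀ m : ℕ, Even m → m < L → ∀ t : ℝ, 0 ≤ t → t ≤ π →
      0 ≤ HHaux L (t + m * π) := by
    intro m hm hmL t ht1 ht2
    rcases eq_or_lt_of_le ht1 with h0 | h0
    · -- t = 0
      rcases Nat.eq_zero_or_pos m with hm0 | hm0
      · subst hm0
        rw [← h0]
        simp only [Nat.cast_zero, zero_mul, add_zero]
        unfold HHaux
        simp only [zero_div, mul_zero, Real.cos_zero, Finset.sum_const, Finset.card_range,
          nsmul_eq_mul, mul_one]
        positivity
      · have hm0' : (1:ℝ) ≤ m := by exact_mod_cast hm0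
        have hmL' : (m : ℝ) ≤ L := by exact_mod_cast hmL.le
        have h1 : 0 < (0:ℝ) + m * π := by nlinarith
        have h2 : (0:ℝ) + m * π ≤ L * π := by nlinarith
        rw [← h0, Hval _ h1 h2, key_sin_even m hm 0, Real.sin_zero, zero_div]
    · rcases eq_or_lt_of_le ht2 with h1 | h1
      · -- t = π
        have hmL' : (m : ℝ) + 1 ≤ L := by exact_mod_cast hmL
        have ha : 0 < π + m * π := by positivity
        have hb : π + m * π ≤ L * π := by nlinarith
        rw [h1, Hval _ ha hb, key_sin_even m hm π, Real.sin_pi, zero_div]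
      · exact (Hpos m hm hmL t h0 h1).le
  -- reduce to HHaux
  have step1 : (∫ u in (0:ℝ)..T, Real.sin u / Real.sin (u / (2 * L)))
      = ∫ u in (0:ℝ)..T, HHaux L u := by
    apply intervalIntegral.integral_congr_ae
    filter_upwards with u hu
    rw [Set.uIoc_of_le hT0.le] at hu
    exact (Hval u hu.1 (hu.2.trans hTL)).symm
  rw [step1]
  -- translated integrals
  have hI : ∀ m : ℕ, (∫ u in ((m:ℝ) * π)..(((m+1 : ℕ) : ℝ) * π), HHaux L u)
      = ∫ t in (0:ℝ)..π, HHaux L (t + m * π) := by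
    intro m
    rw [intervalIntegral.integral_comp_add_right (fun u => HHaux L u) ((m:ℝ) * π)]
    congr 1 <;> push_cast <;> ring
  have hJ : (∫ u in ((j:ℝ) * π)..T, HHaux L u)
      = ∫ t in (0:ℝ)..(π/2), HHaux L (t + j * π) := by
    rw [intervalIntegral.integral_comp_add_right (fun u => HHaux L u) ((j:ℝ) * π)]
    congr 1 <;> ring
  have htotal : (∫ u in (0:ℝ)..T, HHaux L u)
      = (∫ u in (0:ℝ)..((j:ℝ) * π), HHaux L u) + ∫ u in ((j:ℝ) * π)..T, HHaux L u :=
    (intervalIntegral.integral_add_adjacent_intervals (Hint _ _) (Hint _ _)).symm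
  have hsum : (∫ u in (0:ℝ)..((j:ℝ) * π), HHaux L u)
      = ∑ m ∈ Finset.range j, ∫ t in (0:ℝ)..π, HHaux L (t + m * π) := by
    have key := intervalIntegral.sum_integral_adjacent_intervals
      (a := fun m : ℕ => (m : ℝ) * π) (n := j) (fun k _ => Hint _ _)
    simp only [Nat.cast_zero, zero_mul] at key
    rw [← key]
    exact Finset.sum_congr rfl (fun m _ => hI m)
  -- pairing inequality
  have pair : ∀ m : ℕ, Even m → m + 2 ≤ L →
      0 ≤ (∫ t in (0:ℝ)..π, HHaux L (t + m * π))
        + ∫ t in (0:ℝ)..π, HHaux L (t + ((m + 1 : ℕ) : ℝ) * π) := by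
    intro m hm hm2
    rw [← intervalIntegral.integral_add (Hint2 _ _ _) (Hint2 _ _ _)]
    apply intervalIntegral.integral_nonneg hπ.le
    intro t ht
    obtain ⟨ht0, ht1⟩ := ht
    have hm2' : (m : ℝ) + 2 ≤ L := by exact_mod_cast hm2
    have hmodd : Odd (m + 1) := Even.add_one hm
    rcases eq_or_lt_of_le ht0 with h0 | h0
    · have hz : HHaux L (0 + ((m + 1 : ℕ) : ℝ) * π) = 0 := by
        have ha : (0:ℝ) < 0 + ((m+1 : ℕ) : ℝ) * π := by push_cast; nlinarith
        have hb : (0:ℝ) + ((m+1 : ℕ) : ℝ) * π ≤ L * π := by push_cast; nlinarith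
        rw [Hval _ ha hb, key_sin_odd (m+1) hmodd 0, Real.sin_zero, neg_zero, zero_div]
      rw [← h0]
      have := Hnonneg m hm (by omega) 0 le_rfl hπ.le
      simp only [zero_add] at *
      linarith [hz, this]
    · rcases eq_or_lt_of_le ht1 with h1 | h1
      · have hz : HHaux L (π + ((m + 1 : ℕ) : ℝ) * π) = 0 := by
          have ha : (0:ℝ) < π + ((m+1 : ℕ) : ℝ) * π := by positivity
          have hb : π + ((m+1 : ℕ) : ℝ) * π ≤ L * π := by push_cast; nlinarith
          rw [Hval _ ha hb, key_sin_odd (m+1) hmodd π, Real.sin_pi, neg_zero, zero_div]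
        rw [h1]
        linarith [hz, Hnonneg m hm (by omega) π hπ.le le_rfl]
      · have ha1 : 0 < t + (m:ℝ) * π := by positivity
        have hb1 : t + (m:ℝ) * π ≤ L * π := by nlinarith
        have ha2 : 0 < t + ((m+1 : ℕ) : ℝ) * π := by positivity
        have hb2 : t + ((m+1 : ℕ) : ℝ) * π ≤ L * π := by push_cast; nlinarith
        rw [Hval _ ha1 hb1, Hval _ ha2 hb2, key_sin_even m hm t,
          key_sin_odd (m+1) hmodd t]
        have hs1 : 0 < Real.sin ((t + (m:ℝ) * π) / (2 * L)) := den_pos _ ha1 hb1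
        have hs2 : 0 < Real.sin ((t + ((m+1 : ℕ) : ℝ) * π) / (2 * L)) := den_pos _ ha2 hb2
        have hsin : 0 < Real.sin t := Real.sin_pos_of_pos_of_lt_pi h0 h1
        have hle : Real.sin ((t + (m:ℝ) * π) / (2 * L))
            ≤ Real.sin ((t + ((m+1 : ℕ) : ℝ) * π) / (2 * L)) := by
          apply den_le _ _ ha1.le _ hb2
          push_cast; nlinarith
        have hdiv : Real.sin t / Real.sin ((t + ((m+1 : ℕ) : ℝ) * π) / (2 * L))
            ≤ Real.sin t / Real.sin ((t + (m:ℝ) * π) / (2 * L)) := by gcongr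
        rw [neg_div]
        linarith
  -- sum over pairs
  have sum_pairs : ∀ p : ℕ, 2 * p ≤ L →
      0 ≤ ∑ m ∈ Finset.range (2 * p), ∫ t in (0:ℝ)..π, HHaux L (t + m * π) := by
    intro p
    induction p with
    | zero => simp
    | succ q ih =>
      intro hp
      have h2q : 2 * q + 2 ≤ L := by omega
      rw [show 2 * (q + 1) = 2 * q + 1 + 1 from by ring, Finset.sum_range_succ,
        Finset.sum_range_succ]
      have hpair := pair (2 * q) (even_two_mul q) h2q
      have hih := ih (by omega)
      push_cast at hpair ⊢
      linarith
  rw [htotal, hsum, hJ]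
  rcases Nat.even_or_odd j with hje | hjo
  · obtain ⟨p, hp⟩ := hje
    have hjp : j = 2 * p := by omega
    have h1 : 0 ≤ ∑ m ∈ Finset.range j, ∫ t in (0:ℝ)..π, HHaux L (t + m * π) := by
      rw [hjp]; exact sum_pairs p (by omega)
    have h2 : 0 < ∫ t in (0:ℝ)..(π/2), HHaux L (t + j * π) := by
      apply intervalIntegral.intervalIntegral_pos_of_pos_on (Hint2 _ _ _) _ (by positivity)
      intro t ht
      exact Hpos j ⟨p, hp⟩ hj t ht.1 (by linarith [ht.2])
    linarith
  · obtain ⟨p, hp⟩ := hjo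
    have hsum2 : (∑ m ∈ Finset.range j, ∫ t in (0:ℝ)..π, HHaux L (t + m * π))
        = (∑ m ∈ Finset.range (2 * p), ∫ t in (0:ℝ)..π, HHaux L (t + m * π))
          + ∫ t in (0:ℝ)..π, HHaux L (t + ((2 * p : ℕ) : ℝ) * π) := by
      rw [hp, Finset.sum_range_succ]
    have h1 : 0 ≤ ∑ m ∈ Finset.range (2 * p), ∫ t in (0:ℝ)..π, HHaux L (t + m * π) :=
      sum_pairs p (by omega)
    -- final piece: I(2p) + J > 0
    have hsplitI : (∫ t in (0:ℝ)..π, HHaux L (t + ((2 * p : ℕ) : ℝ) * π))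
        = (∫ t in (0:ℝ)..(π/2), HHaux L (t + ((2 * p : ℕ) : ℝ) * π))
          + ∫ t in (π/2)..π, HHaux L (t + ((2 * p : ℕ) : ℝ) * π) :=
      (intervalIntegral.integral_add_adjacent_intervals (Hint2 _ _ _) (Hint2 _ _ _)).symm
    have h2p_lt : 2 * p < L := by omega
    have h2 : 0 < ∫ t in (π/2)..π, HHaux L (t + ((2 * p : ℕ) : ℝ) * π) := by
      apply intervalIntegral.intervalIntegral_pos_of_pos_on (Hint2 _ _ _) _ (by linarith)
      intro t ht
      exact Hpos (2 * p) (even_two_mul p) h2p_lt t (by linarith [ht.1]) ht.2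
    have h3 : 0 ≤ (∫ t in (0:ℝ)..(π/2), HHaux L (t + ((2 * p : ℕ) : ℝ) * π))
        + ∫ t in (0:ℝ)..(π/2), HHaux L (t + (j : ℝ) * π) := by
      rw [← intervalIntegral.integral_add (Hint2 _ _ _) (Hint2 _ _ _)]
      apply intervalIntegral.integral_nonneg (by positivity)
      intro t ht
      obtain ⟨ht0, ht1⟩ := ht
      have hjodd : Odd j := ⟨p, hp⟩
      have hjcast : (j : ℝ) = 2 * (p : ℝ) + 1 := by rw [hp]; push_cast; ring
      rcases eq_or_lt_of_le ht0 with h0 | h0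
      · have hz : HHaux L (0 + (j : ℝ) * π) = 0 := by
          have ha : (0:ℝ) < 0 + (j:ℝ) * π := by rw [hjcast]; nlinarith
          have hb : (0:ℝ) + (j:ℝ) * π ≤ L * π := by nlinarith
          rw [Hval _ ha hb, key_sin_odd j hjodd 0, Real.sin_zero, neg_zero, zero_div]
        rw [← h0]
        linarith [hz, Hnonneg (2 * p) (even_two_mul p) h2p_lt 0 le_rfl hπ.le]
      · have htπ : t < π := by linarith
        have ha1 : 0 < t + ((2 * p : ℕ) : ℝ) * π := by positivity
        have hb1 : t + ((2 * p : ℕ) : ℝ) * π ≤ L * π := by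
          push_cast
          have : 2 * (p : ℝ) + 1 ≤ L := by rw [← hjcast]; exact_mod_cast hj.le
          nlinarith
        have ha2 : 0 < t + (j : ℝ) * π := by positivity
        have hb2 : t + (j : ℝ) * π ≤ L * π := by
          have : t + (j : ℝ) * π ≤ T := by rw [hTdef]; nlinarith
          linarith
        rw [Hval _ ha1 hb1, Hval _ ha2 hb2, key_sin_even (2 * p) (even_two_mul p) t,
          key_sin_odd j hjodd t]
        have hs1 : 0 < Real.sin ((t + ((2 * p : ℕ) : ℝ) * π) / (2 * L)) := den_pos _ ha1 hb1
        have hs2 : 0 < Real.sin ((t + (j : ℝ) * π) / (2 * L)) := den_pos _ ha2 hb2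
        have hsin : 0 < Real.sin t := Real.sin_pos_of_pos_of_lt_pi h0 htπ
        have hle : Real.sin ((t + ((2 * p : ℕ) : ℝ) * π) / (2 * L))
            ≤ Real.sin ((t + (j : ℝ) * π) / (2 * L)) := by
          apply den_le _ _ ha1.le _ hb2
          rw [hjcast]; push_cast; nlinarith
        have hdiv : Real.sin t / Real.sin ((t + (j : ℝ) * π) / (2 * L))
            ≤ Real.sin t / Real.sin ((t + ((2 * p : ℕ) : ℝ) * π) / (2 * L)) := by gcongr
        rw [neg_div]
        linarith
    rw [hsum2]
    linarith
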